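/- For generators ℓ_p with Γ(ℓ_p) = <p> ℓ_p, the twisted Jacobi identity [[ℓ_m,ℓ_n]_q, Γ(ℓ_p)]_q + [[ℓ_n,ℓ_p]_q, Γ(ℓ_m)]_q + [[ℓ_p,ℓ_m]_q, Γ(ℓ_n)]_q = 0 holds in the q-Witt algebra, where [ℓ_a,ℓ_b]_q = [a−b] ℓ_{a+b}. -/

import Mathlib

open Finsupp

noncomputable section

/-- q-number [k]. -/
def qn (q : ℝ) (k : ℤ) : ℝ := (q ^ k - q ^ (-k)) / (q - q⁻¹)

/-- Free module with basis ℓ_n, n ∈ ℤ. -/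
abbrev WittQ := ℤ →₀ ℝ

/-- Basis element ℓ_n. -/
def ell (n : ℤ) : WittQ := Finsupp.single n (1 : ℝ)

/-- Graded q-bracket, determined on basis elements by [ℓ_a, ℓ_b]_q = [a-b] ℓ_{a+b},
extended bilinearly with weights respecting degrees. -/
def qbr (q : ℝ) (f g : WittQ) : WittQ :=
  f.sum fun a x => g.sum fun b y => Finsupp.single (a + b) (x * y * qn q (a - b))

/-- Γ(ℓ_p) = <p> ℓ_p, extended linearly. -/
def Gam (q : ℝ) (f : WittQ) : WittQ :=
  f.sum fun p x => Finsupp.single p ((q ^ p + q ^ (-p)) * x)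

/-!
Each summand is a multiple of `ℓ_{m+n+p}`, so the identity reduces to a scalar one:
the cyclic sum of `[m-n] [m+n-p] <p>` vanishes. Clearing the common denominator
`(q - q⁻¹)²`, this is a Laurent-polynomial identity in `q^m, q^n, q^p`. When `q = 0` the
denominator is `0`, so every q-number is `0` by Lean's convention `x / 0 = 0`.
-/

lemma cyclic_sum_laurent_eq_zero {K : Type*} [Field K] {a b c : K}
    (ha : a ≠ 0) (hb : b ≠ 0) (hc : c ≠ 0) :
    (a / b - (a / b)⁻¹) * (a * b / c - (a * b / c)⁻¹) * (c + c⁻¹)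
      + (b / c - (b / c)⁻¹) * (b * c / a - (b * c / a)⁻¹) * (a + a⁻¹)
      + (c / a - (c / a)⁻¹) * (c * a / b - (c * a / b)⁻¹) * (b + b⁻¹) = 0 := by
  field_simp
  ring

lemma qn_mul_qn_cyclic_sum_eq_zero (q : ℝ) (m n p : ℤ) :
    qn q (m - n) * qn q (m + n - p) * (q ^ p + q ^ (-p))
      + qn q (n - p) * qn q (n + p - m) * (q ^ m + q ^ (-m))
      + qn q (p - m) * qn q (p + m - n) * (q ^ n + q ^ (-n)) = 0 := by
  rcases eq_or_ne q 0 with rfl | hq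
  · simp [qn]
  have key := cyclic_sum_laurent_eq_zero (zpow_ne_zero m hq) (zpow_ne_zero n hq)
    (zpow_ne_zero p hq)
  simp only [qn, zpow_neg, zpow_sub₀ hq, zpow_add₀ hq]
  linear_combination key * (q - q⁻¹)⁻¹ ^ 2

lemma qbr_single_single (q : ℝ) (a b : ℤ) (x y : ℝ) :
    qbr q (single a x) (single b y) = single (a + b) (x * y * qn q (a - b)) := by
  simp [qbr]

lemma Gam_ell (q : ℝ) (k : ℤ) : Gam q (ell k) = single k (q ^ k + q ^ (-k)) := by
  rw [Gam, ell, sum_single_index] <;> simp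

lemma qbr_qbr_ell_Gam_ell (q : ℝ) (m n p : ℤ) :
    qbr q (qbr q (ell m) (ell n)) (Gam q (ell p))
      = single (m + n + p) (qn q (m - n) * qn q (m + n - p) * (q ^ p + q ^ (-p))) := by
  rw [Gam_ell, ell, ell, qbr_single_single, qbr_single_single]
  ring_nf

theorem stmt17_general (q : ℝ) (m n p : ℤ) :
    qbr q (qbr q (ell m) (ell n)) (Gam q (ell p))
      + qbr q (qbr q (ell n) (ell p)) (Gam q (ell m))
      + qbr q (qbr q (ell p) (ell m)) (Gam q (ell n)) = 0 := by
  rw [qbr_qbr_ell_Gam_ell, qbr_qbr_ell_Gam_ell, qbr_qbr_ell_Gam_ell,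
    show n + p + m = m + n + p by ring, show p + m + n = m + n + p by ring,
    ← single_add, ← single_add, single_eq_zero]
  exact qn_mul_qn_cyclic_sum_eq_zero q m n p

theorem stmt17 (q : ℝ) (hq0 : q ≠ 0) (hq1 : q ≠ 1) (hqm1 : q ≠ -1) (m n p : ℤ) :
    qbr q (qbr q (ell m) (ell n)) (Gam q (ell p))
      + qbr q (qbr q (ell n) (ell p)) (Gam q (ell m))
      + qbr q (qbr q (ell p) (ell m)) (Gam q (ell n)) = 0 :=
  stmt17_general q m n p
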